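/- Selection lemma: let u : X → ℝ be bounded Borel and fix δ, ε > 0. There exist Borel measurable maps σ_sup, σ_inf : Ω → X such that σ_sup(x), σ_inf(x) ∈ B_ε(x) for all x ∈ Ω, u(σ_sup(x)) ≥ sup_{B_ε(x)} u − δ, and u(σ_inf(x)) ≤ inf_{B_ε(x)} u + δ. -/

import Mathlib

/-!
The ε-ball supremum `s x = sup_{B_ε(x)} u` is lower semicontinuous (whatever `u` is), hence Borel.
By Lindelöf, one countable set `T` already realises these suprema up to any error. Enumerate `T`
and let `σ x` be the first `y ∈ T` with `dist x y < ε` and `s x < u y + δ`: each such condition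
is Borel in `x`, so `σ` is a countably-valued Borel map. Infima are suprema of `-u`.
-/

open Metric MeasureTheory Set

theorem exists_measurable_mem_of_countable_cover {α β ι : Type*} [MeasurableSpace α]
    [MeasurableSpace β] [Countable ι] {S : ι → Set α} (hS : ∀ i, MeasurableSet (S i))
    (hcov : ∀ x, ∃ i, x ∈ S i) (p : ι → β) :
    ∃ σ : α → β, Measurable σ ∧ ∀ x, ∃ i, x ∈ S i ∧ σ x = p i := by
  classical
  rcases isEmpty_or_nonempty ι with hι | hι
  · have : IsEmpty α := ⟨fun x => (hcov x).elim fun i _ => isEmptyElim i⟩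
    exact ⟨isEmptyElim, Subsingleton.measurable, isEmptyElim⟩
  obtain ⟨e, he⟩ := exists_surjective_nat ι
  have hcov' : ∀ x, ∃ n, x ∈ S (e n) := fun x =>
    let ⟨i, hi⟩ := hcov x
    let ⟨n, hn⟩ := he i
    ⟨n, hn ▸ hi⟩
  exact ⟨fun x => p (e (Nat.find (hcov' x))),
    (measurable_from_nat (f := fun n => p (e n))).comp (measurable_find hcov' fun n => hS (e n)),
    fun x => ⟨_, Nat.find_spec (hcov' x), rfl⟩⟩

section BallSupremum

variable {α : Type*} [PseudoMetricSpace α] {u : α → ℝ} {ε : ℝ}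

theorem lowerSemicontinuous_sSup_image_ball (hε : 0 < ε)
    (hu : ∀ x, BddAbove (u '' ball x ε)) :
    LowerSemicontinuous fun x => sSup (u '' ball x ε) := by
  refine lowerSemicontinuous_iff_isOpen_preimage.2 fun t => ?_
  convert (isOpen_thickening : IsOpen (thickening ε {y | t < u y})) using 1
  ext x
  simp only [mem_preimage, mem_Ioi, lt_csSup_iff (hu x) ((nonempty_ball.2 hε).image u),
    mem_image, mem_thickening_iff, mem_ofPred_eq, mem_ball']
  constructor
  · rintro ⟨_, ⟨z, hxz, rfl⟩, htz⟩
    exact ⟨z, htz, hxz⟩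
  · rintro ⟨z, htz, hxz⟩
    exact ⟨u z, ⟨z, hxz, rfl⟩, htz⟩

theorem exists_countable_forall_lt_sSup_image_ball [SecondCountableTopology α] (hε : 0 < ε) :
    ∃ T : Set α, T.Countable ∧
      ∀ x, ∀ t < sSup (u '' ball x ε), ∃ y ∈ T, dist x y < ε ∧ t < u y := by
  have hT (q : ℚ) := TopologicalSpace.isOpen_biUnion_countable {y | (q : ℝ) < u y}
    (fun y => ball y ε) fun _ _ => isOpen_ball
  choose T hTsub hTc hTU using hT
  refine ⟨⋃ q, T q, countable_iUnion hTc, fun x t ht => ?_⟩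
  obtain ⟨_, ⟨z, hxz, rfl⟩, htz⟩ := exists_lt_of_lt_csSup ((nonempty_ball.2 hε).image u) ht
  obtain ⟨q, htq, hqz⟩ := exists_rat_btwn htz
  have hx : x ∈ ⋃ y ∈ T q, ball y ε := by
    rw [hTU q]
    exact mem_biUnion (show z ∈ {y | (q : ℝ) < u y} from hqz) (mem_ball_comm.1 hxz)
  obtain ⟨y, hyT, hxy⟩ := mem_iUnion₂.1 hx
  exact ⟨y, mem_iUnion.2 ⟨q, hyT⟩, hxy, htq.trans (hTsub q hyT)⟩

variable [MeasurableSpace α] [OpensMeasurableSpace α] [SecondCountableTopology α] {δ : ℝ}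

theorem exists_measurable_sSup_image_ball_le_add (hδ : 0 < δ) (hε : 0 < ε)
    (hu : ∀ x, BddAbove (u '' ball x ε)) :
    ∃ σ : α → α, Measurable σ ∧
      ∀ x, σ x ∈ ball x ε ∧ sSup (u '' ball x ε) ≤ u (σ x) + δ := by
  obtain ⟨T, hTc, hT⟩ := exists_countable_forall_lt_sSup_image_ball (u := u) hε
  have hs := (lowerSemicontinuous_sSup_image_ball hε hu).measurable
  have := hTc.to_subtype
  obtain ⟨σ, hσ, hσT⟩ := exists_measurable_mem_of_countable_cover
    (S := fun y : T => ball (y : α) ε ∩ {x | sSup (u '' ball x ε) < u y + δ})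
    (fun _ => measurableSet_ball.inter (hs measurableSet_Iio))
    (fun x => by
      obtain ⟨y, hyT, hxy, hy⟩ := hT x _ (sub_lt_self _ hδ)
      exact ⟨⟨y, hyT⟩, mem_ball.2 hxy, show sSup (u '' ball x ε) < u y + δ by linarith⟩)
    Subtype.val
  refine ⟨σ, hσ, fun x => ?_⟩
  obtain ⟨y, ⟨hxy, hy⟩, hσy⟩ := hσT x
  rw [hσy]
  exact ⟨mem_ball_comm.1 hxy, hy.le⟩

theorem exists_measurable_le_sInf_image_ball_add (hδ : 0 < δ) (hε : 0 < ε)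
    (hu : ∀ x, BddBelow (u '' ball x ε)) :
    ∃ σ : α → α, Measurable σ ∧
      ∀ x, σ x ∈ ball x ε ∧ u (σ x) ≤ sInf (u '' ball x ε) + δ := by
  have himage (x : α) : (-u) '' ball x ε = -(u '' ball x ε) := by
    rw [← image_neg_eq_neg, image_image, Pi.neg_def]
  obtain ⟨σ, hσ, hσx⟩ := exists_measurable_sSup_image_ball_le_add (u := -u) hδ hε
    fun x => himage x ▸ bddAbove_neg.2 (hu x)
  refine ⟨σ, hσ, fun x => ⟨(hσx x).1, ?_⟩⟩
  have h := (hσx x).2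
  rw [himage, Real.sSup_neg, Pi.neg_apply] at h
  linarith

end BallSupremum

theorem selection_lemma_general {N : ℕ}
    (Ω : Set (EuclideanSpace ℝ (Fin N))) (ε₀ : ℝ)
    (Γ : Set (EuclideanSpace ℝ (Fin N)))
    (hΓ : Γ = {x | x ∉ Ω ∧ Metric.infDist x Ω < ε₀})
    (X : Set (EuclideanSpace ℝ (Fin N))) (hX : X = Ω ∪ Γ)
    (δ ε : ℝ) (hδ : 0 < δ) (hε : 0 < ε) (hεε₀ : ε < ε₀)
    (u : EuclideanSpace ℝ (Fin N) → ℝ)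
    (hub : ∃ M, ∀ x, |u x| ≤ M) :
    ∃ σsup σinf : EuclideanSpace ℝ (Fin N) → EuclideanSpace ℝ (Fin N),
      Measurable σsup ∧ Measurable σinf ∧
      (∀ x ∈ Ω, σsup x ∈ ball x ε ∩ X ∧ σinf x ∈ ball x ε ∩ X) ∧
      (∀ x ∈ Ω, sSup (u '' ball x ε) - δ ≤ u (σsup x)) ∧
      (∀ x ∈ Ω, u (σinf x) ≤ sInf (u '' ball x ε) + δ) := by
  obtain ⟨M, hM⟩ := hub
  have hbdd : BddAbove (range u) ∧ BddBelow (range u) :=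
    ⟨⟨M, forall_mem_range.2 fun x => (abs_le.1 (hM x)).2⟩,
      ⟨-M, forall_mem_range.2 fun x => (abs_le.1 (hM x)).1⟩⟩
  obtain ⟨σsup, hsup, hσsup⟩ := exists_measurable_sSup_image_ball_le_add hδ hε
    fun x => hbdd.1.mono (image_subset_range u _)
  obtain ⟨σinf, hinf, hσinf⟩ := exists_measurable_le_sInf_image_ball_add hδ hε
    fun x => hbdd.2.mono (image_subset_range u _)
  have hballX : ∀ x ∈ Ω, ball x ε ⊆ X := fun x hx y hy => by
    subst hX hΓ
    by_cases hyΩ : y ∈ Ω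
    · exact Or.inl hyΩ
    · exact Or.inr ⟨hyΩ, (infDist_le_dist_of_mem hx).trans_lt ((mem_ball.1 hy).trans hεε₀)⟩
  refine ⟨σsup, σinf, hsup, hinf, fun x hx => ?_, fun x _ => ?_, fun x _ => (hσinf x).2⟩
  · exact ⟨⟨(hσsup x).1, hballX x hx (hσsup x).1⟩, ⟨(hσinf x).1, hballX x hx (hσinf x).1⟩⟩
  · linarith [(hσsup x).2]

/-- selection lemma. For a bounded Borel `u : X → ℝ` and `δ, ε > 0`
there exist Borel maps `σ_sup, σ_inf : Ω → X` selecting `δ`-optimal points in the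
ball `B_ε(x)` for the supremum and infimum of `u`. -/
theorem selection_lemma {N : ℕ}
    (Ω : Set (EuclideanSpace ℝ (Fin N))) (hΩo : IsOpen Ω)
    (hΩb : Bornology.IsBounded Ω) (ε₀ : ℝ) (hε₀ : 0 < ε₀)
    (Γ : Set (EuclideanSpace ℝ (Fin N)))
    (hΓ : Γ = {x | x ∉ Ω ∧ Metric.infDist x Ω < ε₀})
    (X : Set (EuclideanSpace ℝ (Fin N))) (hX : X = Ω ∪ Γ)
    (δ ε : ℝ) (hδ : 0 < δ) (hε : 0 < ε) (hεε₀ : ε < ε₀)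
    (u : EuclideanSpace ℝ (Fin N) → ℝ) (hum : Measurable u)
    (hub : ∃ M, ∀ x, |u x| ≤ M) :
    ∃ σsup σinf : EuclideanSpace ℝ (Fin N) → EuclideanSpace ℝ (Fin N),
      Measurable σsup ∧ Measurable σinf ∧
      (∀ x ∈ Ω, σsup x ∈ ball x ε ∩ X ∧ σinf x ∈ ball x ε ∩ X) ∧
      (∀ x ∈ Ω, sSup (u '' ball x ε) - δ ≤ u (σsup x)) ∧
      (∀ x ∈ Ω, u (σinf x) ≤ sInf (u '' ball x ε) + δ) :=
  selection_lemma_general Ω ε₀ Γ hΓ X hX δ ε hδ hε hεε₀ u hub
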